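/- arXiv:2605.15001 — 2 statements merged into one kernel-verified Lean document; each statement's English description precedes it below -/
import Mathlib

section
/- Semantic version of the loop case (aux) in the proof of Lemma C.2: let x be a variable and β a relation on states such that x is not read by β, in the sense that ∀ s t (r : ℝ), β s t → ∃ t', β (Function.update s x r) t' ∧ ∀ y ≠ x, t' y = t y. Then β*; x := * equals x := *; (β; x := *)* as relations on states: Relation.Comp (Relation.ReflTransGen β) (fun s t => ∃ r : ℝ, t = Function.update s x r) = Relation.Comp (fun s t => ∃ r : ℝ, t = Function.update s x r) (Relation.ReflTransGen (Relation.Comp β (fun s t => ∃ r : ℝ, t = Function.update s x r))). -/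
/-! `x := *` is a preorder on states (it relates states that agree off `x`), and because `β` does
not read `x`, `β` can absorb an earlier change of `x`: `(x := *) ; β ⊆ β ; (x := *)`. For any
preorder `p` with `p ; r ⊆ r ; p` one has `r* ; p = p ; (r ; p)*`: in `⊆` reflexivity of `p`
supplies the missing `p`-steps, in `⊇` each `p` is pushed rightwards past the next `r`-step and the
accumulated `p`'s collapse by transitivity. -/

namespace Relation

variable {α : Type*} {r p : α → α → Prop}

theorem comp_reflTransGen_le_comp_reflTransGen_comp [Std.Refl p] :
    Comp (ReflTransGen r) p ≤ Comp p (ReflTransGen (Comp r p)) := by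
  rintro a c ⟨b, hab, hbc⟩
  rcases hab.cases_tail with rfl | ⟨b', hab', hb'b⟩
  · exact ⟨c, hbc, .refl⟩
  · have hlift : ReflTransGen r ≤ ReflTransGen (Comp r p) :=
      ReflTransGen.mono fun u v huv => ⟨v, huv, refl_of p v⟩
    exact ⟨a, refl_of p a, (hlift a b' hab').tail ⟨b, hb'b, hbc⟩⟩

theorem comp_reflTransGen_comp_le_comp_reflTransGen [IsTrans α p] (h : Comp p r ≤ Comp r p) :
    Comp p (ReflTransGen (Comp r p)) ≤ Comp (ReflTransGen r) p := by
  rintro a c ⟨b, hab, hbc⟩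
  induction hbc with
  | refl => exact ⟨a, .refl, hab⟩
  | tail _ hde ih =>
    obtain ⟨m, ham, hmd⟩ := ih
    obtain ⟨e, hde, hec⟩ := hde
    obtain ⟨e', hme', he'e⟩ := h _ _ ⟨_, hmd, hde⟩
    exact ⟨e', ham.tail hme', trans_of p he'e hec⟩

theorem comp_reflTransGen_eq_comp_reflTransGen_comp [Std.Refl p] [IsTrans α p]
    (h : Comp p r ≤ Comp r p) : Comp (ReflTransGen r) p = Comp p (ReflTransGen (Comp r p)) :=
  le_antisymm comp_reflTransGen_le_comp_reflTransGen_comp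
    (comp_reflTransGen_comp_le_comp_reflTransGen h)

end Relation

section Havoc

variable {V α : Type*} [DecidableEq V]

/-- The nondeterministic assignment `x := *`. -/
def havoc (x : V) (s t : V → α) : Prop := ∃ r, t = Function.update s x r

theorem havoc_iff {x : V} {s t : V → α} : havoc x s t ↔ ∀ y ≠ x, t y = s y := by
  simp [havoc, Function.eq_update_iff]

instance (x : V) : Std.Refl (havoc (α := α) x) :=
  ⟨fun _ => havoc_iff.2 fun _ _ => rfl⟩

instance (x : V) : IsTrans (V → α) (havoc x) :=
  ⟨fun _ _ _ hst htu =>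
    havoc_iff.2 fun y hy => (havoc_iff.1 htu y hy).trans (havoc_iff.1 hst y hy)⟩

theorem havoc_comp_le_comp_havoc {x : V} {β : (V → α) → (V → α) → Prop}
    (hβ : ∀ s t r, β s t → ∃ t', β (Function.update s x r) t' ∧ ∀ y ≠ x, t' y = t y) :
    Relation.Comp (havoc x) β ≤ Relation.Comp β (havoc x) := by
  rintro s t ⟨_, ⟨r, rfl⟩, hβ'⟩
  obtain ⟨t', ht', hagree⟩ := hβ _ t (s x) hβ'
  rw [Function.update_idem, Function.update_eq_self] at ht'
  exact ⟨t', ht', havoc_iff.2 fun y hy => (hagree y hy).symm⟩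

end Havoc

theorem drl_ghost_loop_aux_sound {V : Type*} [DecidableEq V] (x : V)
    (β : (V → ℝ) → (V → ℝ) → Prop)
    (hnotread : ∀ s t (r : ℝ), β s t →
      ∃ t', β (Function.update s x r) t' ∧ ∀ y ≠ x, t' y = t y) :
    Relation.Comp (Relation.ReflTransGen β)
        (fun s t : V → ℝ => ∃ r : ℝ, t = Function.update s x r) =
      Relation.Comp (fun s t : V → ℝ => ∃ r : ℝ, t = Function.update s x r)
        (Relation.ReflTransGen
          (Relation.Comp β (fun s t : V → ℝ => ∃ r : ℝ, t = Function.update s x r))) :=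
  Relation.comp_reflTransGen_eq_comp_reflTransGen_comp (p := havoc x)
    (havoc_comp_le_comp_havoc hnotread)
end

section
/- Semantic version of Theorem 3 (freshness/ghost theorem): let x be a variable and let C be a single-hole program context built inductively from the hole, constant relations γ for which x is semantically fresh (i.e., ∀ s t, γ s t → s x = t x, and ∀ s t r, γ s t ↔ γ (Function.update s x r) (Function.update t x r)), sequential composition (on either side), nondeterministic choice (union, on either side), and loop (reflexive-transitive closure). Let α be a relation such that x is not read by α, in the sense that ∀ s t (r : ℝ), α s t → ∃ t', α (Function.update s x r) t' ∧ ∀ y ≠ x, t' y = t y. Then, writing ρ for the nondeterministic assignment x := *, the relations C(α); ρ and C(α; ρ); ρ are equal: Relation.Comp (C α) ρ = Relation.Comp (C (Relation.Comp α ρ)) ρ. -/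
/-!
Call two states equivalent when they agree off `x`, and say that `β'` simulates `β` when every
`β`-step from a state can be matched by a `β'`-step from any equivalent state, ending in an
equivalent state. Fresh constant relations simulate themselves, and simulation is preserved by
composition, union and reflexive-transitive closure, so a fresh context `C` turns a simulation
of `β` by `β'` into one of `C β` by `C β'`. Since `x := *` forgets the value of `x`, a simulation
of `β` by `β'` gives `β; x := * ⊆ β'; x := *`. Both inclusions of the theorem follow, because
`α` and `α; x := *` simulate each other: `α` does not read `x`, and `x := *` only changes `x`.
-/

/-- A single-hole program context on binary relations over states
(V → ℝ), all of whose fixed (constant) relations are semantically fresh for the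
variable `x`: they neither write `x` (bound effect) nor read `x` (coincidence).
The contexts are generated by: the hole, composition with such a fixed relation
on either side, union with such a fixed relation on either side, and the
reflexive-transitive closure (loop) of a context. -/
inductive IsFreshCtx {V : Type*} [DecidableEq V] (x : V) :
    ((((V → ℝ) → (V → ℝ) → Prop)) → ((V → ℝ) → (V → ℝ) → Prop)) → Prop
  | hole : IsFreshCtx x (fun α => α)
  | compL (γ : (V → ℝ) → (V → ℝ) → Prop)
      (hw : ∀ s t, γ s t → s x = t x)
      (hr : ∀ s t (r : ℝ), γ s t ↔ γ (Function.update s x r) (Function.update t x r))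
      {C} (hC : IsFreshCtx x C) :
      IsFreshCtx x (fun α => Relation.Comp γ (C α))
  | compR (γ : (V → ℝ) → (V → ℝ) → Prop)
      (hw : ∀ s t, γ s t → s x = t x)
      (hr : ∀ s t (r : ℝ), γ s t ↔ γ (Function.update s x r) (Function.update t x r))
      {C} (hC : IsFreshCtx x C) :
      IsFreshCtx x (fun α => Relation.Comp (C α) γ)
  | unionL (γ : (V → ℝ) → (V → ℝ) → Prop)
      (hw : ∀ s t, γ s t → s x = t x)
      (hr : ∀ s t (r : ℝ), γ s t ↔ γ (Function.update s x r) (Function.update t x r))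
      {C} (hC : IsFreshCtx x C) :
      IsFreshCtx x (fun α s t => γ s t ∨ C α s t)
  | unionR (γ : (V → ℝ) → (V → ℝ) → Prop)
      (hw : ∀ s t, γ s t → s x = t x)
      (hr : ∀ s t (r : ℝ), γ s t ↔ γ (Function.update s x r) (Function.update t x r))
      {C} (hC : IsFreshCtx x C) :
      IsFreshCtx x (fun α s t => C α s t ∨ γ s t)
  | star {C} (hC : IsFreshCtx x C) :
      IsFreshCtx x (fun α => Relation.ReflTransGen (C α))

open Function Relation

section
variable {V : Type*} (x : V)

def AgreeOff (s t : V → ℝ) : Prop := ∀ y ≠ x, t y = s y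

def SimUpTo (β β' : (V → ℝ) → (V → ℝ) → Prop) : Prop :=
  ∀ s s' t, AgreeOff x s s' → β s t → ∃ t', β' s' t' ∧ AgreeOff x t t'

def randomAssign [DecidableEq V] (s t : V → ℝ) : Prop := ∃ r : ℝ, t = update s x r

variable {x}

namespace AgreeOff

variable {s t u : V → ℝ}

theorem refl (s : V → ℝ) : AgreeOff x s s := fun _ _ => rfl

theorem symm (h : AgreeOff x s t) : AgreeOff x t s := fun y hy => (h y hy).symm

theorem trans (h₁ : AgreeOff x s t) (h₂ : AgreeOff x t u) : AgreeOff x s u :=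
  fun y hy => (h₂ y hy).trans (h₁ y hy)

end AgreeOff

namespace SimUpTo

variable {β β' γ γ' : (V → ℝ) → (V → ℝ) → Prop}

theorem comp (hβ : SimUpTo x β β') (hγ : SimUpTo x γ γ') :
    SimUpTo x (Comp β γ) (Comp β' γ') := by
  rintro s s' t hs ⟨u, hsu, hut⟩
  obtain ⟨u', hsu', hu⟩ := hβ s s' u hs hsu
  obtain ⟨t', hut', ht⟩ := hγ u u' t hu hut
  exact ⟨t', ⟨u', hsu', hut'⟩, ht⟩

theorem union (hβ : SimUpTo x β β') (hγ : SimUpTo x γ γ') :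
    SimUpTo x (fun s t => β s t ∨ γ s t) (fun s t => β' s t ∨ γ' s t) := by
  rintro s s' t hs (hst | hst)
  · obtain ⟨t', hst', ht⟩ := hβ s s' t hs hst
    exact ⟨t', Or.inl hst', ht⟩
  · obtain ⟨t', hst', ht⟩ := hγ s s' t hs hst
    exact ⟨t', Or.inr hst', ht⟩

theorem reflTransGen (hβ : SimUpTo x β β') :
    SimUpTo x (ReflTransGen β) (ReflTransGen β') := by
  intro s s' t hs hst
  induction hst with
  | refl => exact ⟨s', .refl, hs⟩
  | tail _ hut ih =>
    obtain ⟨u', hsu', hu⟩ := ih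
    obtain ⟨t', hut', ht⟩ := hβ _ u' _ hu hut
    exact ⟨t', hsu'.tail hut', ht⟩

end SimUpTo

section update

variable [DecidableEq V]

namespace AgreeOff

variable {s t : V → ℝ}

theorem update_right (s : V → ℝ) (r : ℝ) : AgreeOff x s (update s x r) :=
  fun _ hy => update_of_ne hy _ _

theorem eq_update (h : AgreeOff x s t) : t = update s x (t x) :=
  eq_update_iff.2 ⟨rfl, h⟩

theorem update_eq_update (h : AgreeOff x s t) (r : ℝ) : update s x r = update t x r := by
  rw [h.eq_update, update_idem]

end AgreeOff

namespace SimUpTo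

variable {β β' γ : (V → ℝ) → (V → ℝ) → Prop}

theorem of_fresh (hr : ∀ s t (r : ℝ), γ s t ↔ γ (update s x r) (update t x r)) :
    SimUpTo x γ γ := by
  intro s s' t hs hγ
  refine ⟨update t x (s' x), ?_, AgreeOff.update_right t _⟩
  simpa only [← hs.eq_update] using (hr s t (s' x)).1 hγ

theorem of_notRead {α : (V → ℝ) → (V → ℝ) → Prop}
    (hα : ∀ s t (r : ℝ), α s t → ∃ t', α (update s x r) t' ∧ ∀ y ≠ x, t' y = t y) :
    SimUpTo x α α := by
  intro s s' t hs hst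
  rw [hs.eq_update]
  exact hα s t _ hst

theorem randomAssign_eq : SimUpTo x (randomAssign x) (· = ·) := by
  rintro s s' _ hs ⟨r, rfl⟩
  exact ⟨s', rfl, (AgreeOff.update_right s r).symm.trans hs⟩

theorem eq_randomAssign : SimUpTo x (· = ·) (randomAssign x) := by
  rintro s s' _ hs rfl
  exact ⟨update s' x (s x), ⟨_, rfl⟩, hs.trans (AgreeOff.update_right s' _)⟩

theorem comp_randomAssign_le (h : SimUpTo x β β') :
    Comp β (randomAssign x) ≤ Comp β' (randomAssign x) := by
  rintro s _ ⟨u, hsu, r, rfl⟩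
  obtain ⟨u', hsu', hu⟩ := h s s u (AgreeOff.refl s) hsu
  exact ⟨u', hsu', r, hu.update_eq_update r⟩

end SimUpTo

theorem IsFreshCtx.simUpTo {C : ((V → ℝ) → (V → ℝ) → Prop) → ((V → ℝ) → (V → ℝ) → Prop)}
    (hC : IsFreshCtx x C) {β β' : (V → ℝ) → (V → ℝ) → Prop} (h : SimUpTo x β β') :
    SimUpTo x (C β) (C β') := by
  induction hC with
  | hole => exact h
  | compL γ _ hr _ ih => exact (SimUpTo.of_fresh hr).comp ih
  | compR γ _ hr _ ih => exact ih.comp (SimUpTo.of_fresh hr)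
  | unionL γ _ hr _ ih => exact (SimUpTo.of_fresh hr).union ih
  | unionR γ _ hr _ ih => exact ih.union (SimUpTo.of_fresh hr)
  | star _ ih => exact ih.reflTransGen

end update

end

theorem drl_fresh_ghost_theorem {V : Type*} [DecidableEq V] (x : V)
    (C : (((V → ℝ) → (V → ℝ) → Prop)) → ((V → ℝ) → (V → ℝ) → Prop))
    (hC : IsFreshCtx x C)
    (α : (V → ℝ) → (V → ℝ) → Prop)
    (hα : ∀ s t (r : ℝ), α s t →
      ∃ t', α (Function.update s x r) t' ∧ ∀ y ≠ x, t' y = t y) :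
    Relation.Comp (C α) (fun s t : V → ℝ => ∃ r : ℝ, t = Function.update s x r) =
      Relation.Comp
        (C (Relation.Comp α (fun s t : V → ℝ => ∃ r : ℝ, t = Function.update s x r)))
        (fun s t : V → ℝ => ∃ r : ℝ, t = Function.update s x r) := by
  have hαα := SimUpTo.of_notRead hα
  have to_ghost : SimUpTo x α (Comp α (randomAssign x)) := by
    simpa only [comp_eq] using hαα.comp SimUpTo.eq_randomAssign
  have of_ghost : SimUpTo x (Comp α (randomAssign x)) α := by
    simpa only [comp_eq] using hαα.comp SimUpTo.randomAssign_eq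
  exact le_antisymm (hC.simUpTo to_ghost).comp_randomAssign_le
    (hC.simUpTo of_ghost).comp_randomAssign_le
end
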